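/- Let L = Id − E be the simple generator on (Ω, μ), so that T_t f = E f + e^{−t}(f − E f). Let f : Ω → (0,∞). Then ‖T_t f‖_q ≥ ‖f‖_p holds in each of the following two cases: (i) q < p ≤ 0 and t ≥ log((2−q)/(2−p)); (ii) 0 ≤ q < p < 1 and t ≥ log(((1−q)(2−p)) / ((1−p)(2−q))). -/

import Mathlib

/-!
Write `φ_r = boxCox r`, i.e. `φ_r(x) = (x ^ r - 1) / r` and `φ_0 = log`. Under a probability
weight `φ_r(‖g‖_r) = E φ_r(g)`, and `φ_r(x)` increases both in `x` and in `r`; so for `q ≤ p` it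
suffices that `E φ_p(f) ≤ E φ_q(T_t f)`. Normalise `E f = 1` and put `s = e^{-t}`. This follows
from the pointwise inequality `φ_p(y) + (s - 1) (y - 1) ≤ φ_q(1 - s + s y)`, whose correction
term has mean zero. The two sides agree to first order at `y = 1`, so it holds as soon as their
difference is convex, i.e. `(1 - q) s² (1 - s + s y) ^ (q - 2) ≤ (1 - p) y ^ (p - 2)`; by
concavity of `φ_q` this only has to be checked at the largest admissible `s`. Weighted AM–GM
reduces it to an inequality between constants: at the two thresholds it reads
`(1 - q) (2 - p)² ≤ (1 - p) (2 - q)²`, resp. `b log b - a log a ≤ (a + b) log ((1 + b) / (1 + a))`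
with `a = 1 - p`, `b = 1 - q`.
-/

open Real Finset

noncomputable section

variable {Ω : Type*}

/-- Expectation `E f = ∑ ω, μ ω * f ω`. -/
def pexp [Fintype Ω] (μ : Ω → ℝ) (f : Ω → ℝ) : ℝ := ∑ ω, μ ω * f ω

/-- Dirichlet form `𝓔(f,g) = E[f · L g]`. -/
def dform [Fintype Ω] (μ : Ω → ℝ) (L : (Ω → ℝ) →ₗ[ℝ] (Ω → ℝ)) (f g : Ω → ℝ) : ℝ :=
  pexp μ fun ω => f ω * L g ω

/-- Entropy `Ent(f) = E[f log f] − (E f) log (E f)`. -/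
def entE [Fintype Ω] (μ : Ω → ℝ) (f : Ω → ℝ) : ℝ :=
  pexp μ (fun ω => f ω * Real.log (f ω)) - pexp μ f * Real.log (pexp μ f)

/-- Variance `Var(f) = E[f²] − (E f)²`. -/
def varE [Fintype Ω] (μ : Ω → ℝ) (f : Ω → ℝ) : ℝ :=
  pexp μ (fun ω => f ω ^ 2) - (pexp μ f) ^ 2

/-- The structural conditions on the Markov generator `L`: `L 1 = 0`, self-adjointness,
positive semidefiniteness, and nonnegativity of `L f` at a global maximum point of `f`. -/
def IsGen [Fintype Ω] (μ : Ω → ℝ) (L : (Ω → ℝ) →ₗ[ℝ] (Ω → ℝ)) : Prop :=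
  L (fun _ => 1) = 0 ∧
  (∀ f g, pexp μ (fun ω => f ω * L g ω) = pexp μ (fun ω => g ω * L f ω)) ∧
  (∀ f, 0 ≤ pexp μ (fun ω => f ω * L f ω)) ∧
  (∀ (f : Ω → ℝ) (ω : Ω), (∀ x, f x ≤ f ω) → 0 ≤ L f ω)

/-- The `p`-logSob inequality with constant `C` (with the conventions for `p = 0` and `p = 1`). -/
def LogSob [Fintype Ω] (μ : Ω → ℝ) (L : (Ω → ℝ) →ₗ[ℝ] (Ω → ℝ)) (p C : ℝ) : Prop :=
  if p = 0 then
    ∀ f : Ω → ℝ, (∀ ω, 0 < f ω) →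
      varE μ (fun ω => Real.log (f ω)) ≤ -(C / 2) * dform μ L f (fun ω => (f ω)⁻¹)
  else if p = 1 then
    ∀ f : Ω → ℝ, (∀ ω, 0 < f ω) →
      entE μ f ≤ C / 4 * dform μ L f (fun ω => Real.log (f ω))
  else
    ∀ f : Ω → ℝ, (∀ ω, 0 < f ω) →
      entE μ (fun ω => f ω ^ p) ≤
        C * p ^ 2 / (4 * (p - 1)) * dform μ L (fun ω => f ω ^ (p - 1)) f

/-- Markov semigroup `T t = e^{-tL}`. -/
def heat [Fintype Ω] (L : (Ω → ℝ) →ₗ[ℝ] (Ω → ℝ)) (t : ℝ) (f : Ω → ℝ) : Ω → ℝ :=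
  NormedSpace.exp ((-t) • (LinearMap.toContinuousLinearMap L)) f

/-- `‖f‖_p` for positive `f` and arbitrary real `p`, with `‖f‖_0 = exp (E log f)`. -/
def pnorm [Fintype Ω] (μ : Ω → ℝ) (p : ℝ) (f : Ω → ℝ) : ℝ :=
  if p = 0 then Real.exp (pexp μ fun ω => Real.log (f ω))
  else (pexp μ fun ω => f ω ^ p) ^ (1 / p)

/-- `‖f‖_p = (E |f|^p)^{1/p}` for real-valued `f`. -/
def pnormAbs [Fintype Ω] (μ : Ω → ℝ) (p : ℝ) (f : Ω → ℝ) : ℝ :=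
  (pexp μ fun ω => |f ω| ^ p) ^ (1 / p)

/-- Hölder conjugate `p' = p/(p-1)`, with the convention `0' = 0`. -/
def hconj (p : ℝ) : ℝ := if p = 0 then 0 else p / (p - 1)

/-- The simple generator `L = Id − E`. -/
def simpleL [Fintype Ω] (μ : Ω → ℝ) : (Ω → ℝ) →ₗ[ℝ] (Ω → ℝ) where
  toFun f := fun ω => f ω - pexp μ f
  map_add' f g := by
    funext ω
    simp only [Pi.add_apply, pexp, mul_add, Finset.sum_add_distrib]
    ring
  map_smul' c f := by
    funext ω
    simp only [Pi.smul_apply, smul_eq_mul, pexp, RingHom.id_apply]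
    rw [mul_sub, Finset.mul_sum]
    congr 1
    exact Finset.sum_congr rfl fun x _ => by ring

open Set

lemma ConvexOn.add_mul_sub_le_of_hasDerivAt {S : Set ℝ} {f : ℝ → ℝ} {x y f' : ℝ}
    (hf : ConvexOn ℝ S f) (hx : x ∈ S) (hy : y ∈ S) (hf' : HasDerivAt f f' x) :
    f x + f' * (y - x) ≤ f y := by
  rcases lt_trichotomy x y with hxy | rfl | hyx
  · have h := hf.le_slope_of_hasDerivAt hx hy hxy hf'
    rw [slope_def_field, le_div_iff₀ (sub_pos.2 hxy)] at h
    linarith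
  · simp
  · have h := hf.slope_le_of_hasDerivAt hy hx hyx hf'
    rw [slope_def_field, div_le_iff₀ (sub_pos.2 hyx)] at h
    linarith

lemma ConcaveOn.le_add_mul_sub_of_hasDerivAt {S : Set ℝ} {f : ℝ → ℝ} {x y f' : ℝ}
    (hf : ConcaveOn ℝ S f) (hx : x ∈ S) (hy : y ∈ S) (hf' : HasDerivAt f f' x) :
    f y ≤ f x + f' * (y - x) := by
  have := hf.neg.add_mul_sub_le_of_hasDerivAt hx hy hf'.neg
  simp only [Pi.neg_apply] at this
  linarith

def boxCox (r x : ℝ) : ℝ := if r = 0 then log x else (x ^ r - 1) / r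

lemma boxCox_zero_left (x : ℝ) : boxCox 0 x = log x := if_pos rfl

lemma boxCox_of_ne_zero {r : ℝ} (hr : r ≠ 0) (x : ℝ) : boxCox r x = (x ^ r - 1) / r := if_neg hr

@[simp] lemma boxCox_one_right (r : ℝ) : boxCox r 1 = 0 := by
  unfold boxCox; split_ifs <;> simp

lemma hasDerivAt_boxCox (r : ℝ) {x : ℝ} (hx : 0 < x) : HasDerivAt (boxCox r) (x ^ (r - 1)) x := by
  rcases eq_or_ne r 0 with rfl | hr
  · rw [zero_sub, rpow_neg_one]
    exact (hasDerivAt_log hx.ne').congr_of_eventuallyEq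
      (Filter.Eventually.of_forall fun y => boxCox_zero_left y)
  · have h := ((hasDerivAt_rpow_const (p := r) (Or.inl hx.ne')).sub_const 1).div_const r
    rw [mul_div_cancel_left₀ _ hr] at h
    exact h.congr_of_eventuallyEq (Filter.Eventually.of_forall fun y => boxCox_of_ne_zero hr y)

lemma hasDerivAt_rpow_sub_one (r : ℝ) {x : ℝ} (hx : 0 < x) :
    HasDerivAt (fun y => y ^ (r - 1)) ((r - 1) * x ^ (r - 2)) x := by
  have h := hasDerivAt_rpow_const (p := r - 1) (Or.inl hx.ne')
  rwa [show r - 1 - 1 = r - 2 by ring] at h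

lemma strictMonoOn_boxCox (r : ℝ) : StrictMonoOn (boxCox r) (Ioi 0) :=
  strictMonoOn_of_hasDerivWithinAt_pos (convex_Ioi 0)
    (fun _ hx => (hasDerivAt_boxCox r hx).continuousAt.continuousWithinAt)
    (fun _ hx => (hasDerivAt_boxCox r (interior_subset hx)).hasDerivWithinAt)
    (fun x hx => rpow_pos_of_pos (interior_subset hx : 0 < x) _)

lemma concaveOn_boxCox {r : ℝ} (hr : r ≤ 1) : ConcaveOn ℝ (Ioi 0) (boxCox r) := by
  refine concaveOn_of_hasDerivWithinAt2_nonpos (convex_Ioi 0)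
    (fun _ hx => (hasDerivAt_boxCox r hx).continuousAt.continuousWithinAt)
    (fun _ hx => (hasDerivAt_boxCox r (interior_subset hx)).hasDerivWithinAt)
    (fun _ hx => (hasDerivAt_rpow_sub_one r (interior_subset hx)).hasDerivWithinAt)
    (fun x hx => ?_)
  have hx : 0 < x := interior_subset hx
  exact mul_nonpos_of_nonpos_of_nonneg (by linarith) (rpow_nonneg hx.le _)

/-- `φ_r(x)` is the slope at `0` of the convex function `r ↦ x ^ r`, hence monotone in `r`. -/
lemma boxCox_le_boxCox_left {q p x : ℝ} (hx : 0 < x) (hqp : q ≤ p) : boxCox q x ≤ boxCox p x := by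
  have hconv := convexOn_rpow_left hx
  have htangent (r : ℝ) : 1 + log x * r ≤ x ^ r := by
    have hderiv : HasDerivAt (fun r : ℝ => x ^ r) (log x) 0 := by
      simpa using (hasStrictDerivAt_const_rpow hx 0).hasDerivAt
    simpa using hconv.add_mul_sub_le_of_hasDerivAt (mem_univ 0) (mem_univ r) hderiv
  rcases eq_or_ne q 0 with rfl | hq <;> rcases eq_or_ne p 0 with rfl | hp
  · rfl
  · rw [boxCox_zero_left, boxCox_of_ne_zero hp, le_div_iff₀ (lt_of_le_of_ne hqp (Ne.symm hp))]
    linarith [htangent p]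
  · rw [boxCox_zero_left, boxCox_of_ne_zero hq, div_le_iff_of_neg (lt_of_le_of_ne hqp hq)]
    linarith [htangent q]
  · simpa [boxCox_of_ne_zero, hq, hp] using
      hconv.secant_mono (mem_univ 0) (mem_univ q) (mem_univ p) hq hp hqp

def CurvatureBound (p q s : ℝ) : Prop :=
  ∀ x, 0 < x → (1 - q) * s ^ 2 * (1 - s + s * x) ^ (q - 2) ≤ (1 - p) * x ^ (p - 2)

lemma one_sub_add_mul_pos {s y : ℝ} (hs0 : 0 ≤ s) (hs1 : s ≤ 1) (hy : 0 < y) :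
    0 < 1 - s + s * y := by
  rcases hs1.lt_or_eq with hs1 | rfl
  · nlinarith
  · linarith

/-- The second derivative of `y ↦ φ_q(1 - s + s y) - φ_p(y)` is nonnegative by the curvature
bound, and its value and derivative at `y = 1` are those of `(s - 1) (y - 1)`. -/
lemma boxCox_add_le_boxCox_affine {p q s y : ℝ} (hs0 : 0 ≤ s) (hs1 : s ≤ 1)
    (hK : CurvatureBound p q s) (hy : 0 < y) :
    boxCox p y + (s - 1) * (y - 1) ≤ boxCox q (1 - s + s * y) := by
  set G : ℝ → ℝ := fun y => boxCox q (1 - s + s * y) - boxCox p y - (s - 1) * (y - 1)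
  have haffine (y : ℝ) : HasDerivAt (fun y => 1 - s + s * y) s y := by
    simpa using ((hasDerivAt_id y).const_mul s).const_add (1 - s)
  have hG' {y : ℝ} (hy : 0 < y) :
      HasDerivAt G (s * (1 - s + s * y) ^ (q - 1) - y ^ (p - 1) - (s - 1)) y := by
    have h := (((hasDerivAt_boxCox q (one_sub_add_mul_pos hs0 hs1 hy)).comp y (haffine y)).sub
      (hasDerivAt_boxCox p hy)).sub (((hasDerivAt_id y).sub_const 1).const_mul (s - 1))
    exact h.congr_deriv (by ring)
  have hG'' {y : ℝ} (hy : 0 < y) :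
      HasDerivAt (fun y => s * (1 - s + s * y) ^ (q - 1) - y ^ (p - 1) - (s - 1))
        (s * ((q - 1) * (1 - s + s * y) ^ (q - 2) * s) - (p - 1) * y ^ (p - 2)) y :=
    ((((hasDerivAt_rpow_sub_one q (one_sub_add_mul_pos hs0 hs1 hy)).comp y
      (haffine y)).const_mul s).sub (hasDerivAt_rpow_sub_one p hy)).sub_const (s - 1)
  have hconvex : ConvexOn ℝ (Ioi 0) G := by
    refine convexOn_of_hasDerivWithinAt2_nonneg (convex_Ioi 0)
      (fun _ hx => (hG' hx).continuousAt.continuousWithinAt)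
      (fun _ hx => (hG' (interior_subset hx)).hasDerivWithinAt)
      (fun _ hx => (hG'' (interior_subset hx)).hasDerivWithinAt) (fun x hx => ?_)
    have := hK x (interior_subset hx)
    linarith
  have h := hconvex.add_mul_sub_le_of_hasDerivAt (mem_Ioi.2 one_pos) hy (hG' one_pos)
  simp only [G, mul_one, sub_add_cancel, one_rpow, boxCox_one_right, sub_self, mul_zero] at h
  linarith

/-- Tangent line of the concave `φ_q` at `1 - s + s y`: the factor `(1 - s + s y) ^ (q - 1) - 1`
has the sign opposite to `y - 1`. -/
lemma boxCox_affine_sub_le_of_le {q s σ y : ℝ} (hq : q ≤ 1) (hs : 0 ≤ s) (hsσ : s ≤ σ)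
    (hσ : σ ≤ 1) (hy : 0 < y) :
    boxCox q (1 - σ + σ * y) - (σ - 1) * (y - 1) ≤
      boxCox q (1 - s + s * y) - (s - 1) * (y - 1) := by
  have hu := one_sub_add_mul_pos hs (hsσ.trans hσ) hy
  have htangent := (concaveOn_boxCox hq).le_add_mul_sub_of_hasDerivAt hu
    (one_sub_add_mul_pos (hs.trans hsσ) hσ hy) (hasDerivAt_boxCox q hu)
  have hsign : ((1 - s + s * y) ^ (q - 1) - 1) * (y - 1) ≤ 0 := by
    rcases le_total 1 y with h1y | hy1
    · have : 1 ≤ 1 - s + s * y := by nlinarith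
      exact mul_nonpos_of_nonpos_of_nonneg
        (sub_nonpos.2 (rpow_le_one_of_one_le_of_nonpos this (by linarith))) (by linarith)
    · have : 1 - s + s * y ≤ 1 := by nlinarith
      exact mul_nonpos_of_nonneg_of_nonpos
        (sub_nonneg.2 (one_le_rpow_of_pos_of_le_one_of_nonpos hu this (by linarith)))
        (by linarith)
  nlinarith [mul_nonneg (sub_nonneg.2 hsσ) (neg_nonneg.2 hsign)]

lemma boxCox_add_le_boxCox_affine_of_le {p q s σ y : ℝ} (hq : q ≤ 1) (hs : 0 ≤ s) (hsσ : s ≤ σ)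
    (hσ : σ ≤ 1) (hK : CurvatureBound p q σ) (hy : 0 < y) :
    boxCox p y + (s - 1) * (y - 1) ≤ boxCox q (1 - s + s * y) := by
  have h := boxCox_add_le_boxCox_affine (hs.trans hsσ) hσ hK hy
  have := boxCox_affine_sub_le_of_le hq hs hsσ hσ hy
  linarith

/-- Weighted AM–GM `1 - s + s x ≥ ((1 - s) / (1 - l)) ^ (1 - l) (s x / l) ^ l` with the weight
`l = (2 - p) / (2 - q)` matching the exponents, taken in logarithms: it reduces the curvature
bound to one inequality between constants (attained at the minimising `x`). -/
lemma curvatureBound_of_log_le {p q s l : ℝ} (hq : q < 1) (hs0 : 0 < s) (hs1 : s < 1)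
    (hl0 : 0 < l) (hl1 : l < 1) (hl : l * (2 - q) = 2 - p) (hp : p < 1)
    (h : log (1 - q) + 2 * log s ≤
      log (1 - p) + (p - q) * log ((1 - s) / (1 - l)) + (2 - p) * log (s / l)) :
    CurvatureBound p q s := by
  intro x hx
  have hu : 0 < 1 - s + s * x := by nlinarith
  have hamgm : (1 - l) * log ((1 - s) / (1 - l)) + l * (log (s / l) + log x) ≤
      log (1 - s + s * x) := by
    have hconc := strictConcaveOn_log_Ioi.concaveOn.2 (mem_Ioi.2 (div_pos (sub_pos.2 hs1)
      (sub_pos.2 hl1))) (mem_Ioi.2 (by positivity : 0 < s / l * x)) (sub_nonneg.2 hl1.le)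
      hl0.le (sub_add_cancel 1 l)
    rw [smul_eq_mul, smul_eq_mul, smul_eq_mul, smul_eq_mul, log_mul (by positivity) hx.ne',
      mul_div_cancel₀ _ (sub_pos.2 hl1).ne', ← mul_assoc, mul_div_cancel₀ _ hl0.ne'] at hconc
    linarith
  have hweights : (2 - q) * ((1 - l) * log ((1 - s) / (1 - l)) + l * (log (s / l) + log x)) =
      (p - q) * log ((1 - s) / (1 - l)) + (2 - p) * (log (s / l) + log x) := by
    linear_combination (log (s / l) + log x - log ((1 - s) / (1 - l))) * hl
  have hscaled := mul_le_mul_of_nonneg_left hamgm (by linarith : 0 ≤ 2 - q)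
  have h1q : 0 < 1 - q := by linarith
  have h1p : 0 < 1 - p := by linarith
  rw [← log_le_log_iff (by positivity) (by positivity), log_mul (by positivity) (by positivity),
    log_mul h1q.ne' (by positivity), log_mul h1p.ne' (by positivity), log_pow, log_rpow hu,
    log_rpow hx]
  push_cast
  linarith

lemma curvatureBound_of_nonpos {p q : ℝ} (hqp : q < p) (hp : p ≤ 0) :
    CurvatureBound p q ((2 - p) / (2 - q)) := by
  have h2q : 0 < 2 - q := by linarith
  have hl1 : (2 - p) / (2 - q) < 1 := (div_lt_one h2q).2 (by linarith)
  have h2p : 0 < 2 - p := by linarith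
  have hl0 : 0 < (2 - p) / (2 - q) := div_pos h2p h2q
  refine curvatureBound_of_log_le (by linarith) hl0 hl1 hl0 hl1
    (div_mul_cancel₀ _ h2q.ne') (by linarith) ?_
  have hconst : (1 - q) * ((2 - p) / (2 - q)) ^ 2 ≤ 1 - p := by
    rw [div_pow, ← mul_div_assoc, div_le_iff₀ (by positivity)]
    nlinarith [mul_nonneg (sub_nonneg.2 hqp.le) (by nlinarith : 0 ≤ p * q - p - q)]
  rw [div_self (sub_pos.2 hl1).ne', div_self hl0.ne', log_one, mul_zero, mul_zero,
    add_zero, add_zero, ← log_rpow hl0, ← log_mul (by linarith) (by positivity)]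
  norm_cast
  exact log_le_log (mul_pos (by linarith) (pow_pos hl0 2)) hconst

/-- `F(x) = (a + x) (log (1 + x) - log (1 + a)) - (x log x - a log a)` is concave, vanishes at `a`,
and `F 1 ≥ 0` is midpoint convexity of `x log x` between `a` and `1`. -/
lemma mul_log_sub_mul_log_le {a b : ℝ} (ha : 0 < a) (hab : a ≤ b) (hb : b ≤ 1) :
    b * log b - a * log a ≤ (a + b) * (log (1 + b) - log (1 + a)) := by
  set F : ℝ → ℝ := fun x => (a + x) * (log (1 + x) - log (1 + a)) - (x * log x - a * log a)
  have hlog1 {x : ℝ} (hx : 0 < x) : HasDerivAt (fun x => log (1 + x)) (1 + x)⁻¹ x := by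
    simpa using ((hasDerivAt_id x).const_add 1).log (by simp only [id]; linarith)
  have hF' {x : ℝ} (hx : 0 < x) : HasDerivAt F
      (log (1 + x) - log (1 + a) + (a + x) / (1 + x) - (log x + 1)) x := by
    have h := (((hasDerivAt_id x).const_add a).mul ((hlog1 hx).sub_const (log (1 + a)))).sub
      (((hasDerivAt_id x).mul (hasDerivAt_log hx.ne')).sub_const (a * log a))
    have h1x : 1 + x ≠ 0 := by linarith
    exact h.congr_deriv (by simp only [id]; field_simp)
  have hF'' {x : ℝ} (hx : 0 < x) : HasDerivAt
      (fun x => log (1 + x) - log (1 + a) + (a + x) / (1 + x) - (log x + 1))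
      ((1 + x)⁻¹ + (1 - a) / (1 + x) ^ 2 - x⁻¹) x := by
    have h := (((hlog1 hx).sub_const (log (1 + a))).add (((hasDerivAt_id x).const_add a).div
      ((hasDerivAt_id x).const_add 1) (by simp only [id]; linarith))).sub
      ((hasDerivAt_log hx.ne').add_const 1)
    exact h.congr_deriv (by simp only [id]; ring)
  have hconcave : ConcaveOn ℝ (Ioi 0) F := by
    refine concaveOn_of_hasDerivWithinAt2_nonpos (convex_Ioi 0)
      (fun _ hx => (hF' hx).continuousAt.continuousWithinAt)
      (fun _ hx => (hF' (interior_subset hx)).hasDerivWithinAt)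
      (fun _ hx => (hF'' (interior_subset hx)).hasDerivWithinAt) (fun x hx => ?_)
    have hx : 0 < x := interior_subset hx
    rw [sub_nonpos, ← sub_nonneg]
    have : x⁻¹ - ((1 + x)⁻¹ + (1 - a) / (1 + x) ^ 2) = (1 + a * x) / (x * (1 + x) ^ 2) := by
      field_simp; ring
    rw [this]
    positivity
  have hFa : F a = 0 := by simp [F]
  have hF1 : 0 ≤ F 1 := by
    have hmid := convexOn_mul_log.2 (mem_Ici.2 ha.le) (mem_Ici.2 zero_le_one)
      (by norm_num : (0 : ℝ) ≤ 1 / 2) (by norm_num : (0 : ℝ) ≤ 1 / 2) (by norm_num)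
    simp only [smul_eq_mul, log_one, mul_zero, add_zero] at hmid
    rw [show 1 / 2 * a + 1 / 2 * 1 = (1 + a) / 2 by ring,
      log_div (by linarith) two_ne_zero] at hmid
    simp only [F, log_one, mul_zero, zero_sub, sub_neg_eq_add, one_add_one_eq_two]
    linarith
  have := hconcave.min_le_of_mem_Icc (mem_Ioi.2 ha) (mem_Ioi.2 one_pos) ⟨hab, hb⟩
  rw [hFa, min_eq_left hF1] at this
  simp only [F] at this
  linarith

lemma log_mul_div_mul {x y z w : ℝ} (hx : 0 < x) (hy : 0 < y) (hz : 0 < z) (hw : 0 < w) :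
    log (x * y / (z * w)) = log x + log y - log z - log w := by
  rw [log_div (by positivity) (by positivity), log_mul hx.ne' hy.ne', log_mul hz.ne' hw.ne']
  ring

lemma curvatureBound_of_nonneg {p q : ℝ} (hq : 0 ≤ q) (hqp : q < p) (hp : p < 1) :
    CurvatureBound p q ((1 - p) * (2 - q) / ((1 - q) * (2 - p))) := by
  have h1p : 0 < 1 - p := by linarith
  have h1q : 0 < 1 - q := by linarith
  have h2p : 0 < 2 - p := by linarith
  have h2q : 0 < 2 - q := by linarith
  have hl1 : (2 - p) / (2 - q) < 1 := (div_lt_one h2q).2 (by linarith)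
  have hratio : (1 - (1 - p) * (2 - q) / ((1 - q) * (2 - p))) / (1 - (2 - p) / (2 - q)) =
      1 * (2 - q) / ((1 - q) * (2 - p)) := by
    have e1 : 1 - (2 - p) / (2 - q) = (p - q) / (2 - q) := by field_simp; ring
    have e2 : 1 - (1 - p) * (2 - q) / ((1 - q) * (2 - p)) = (p - q) / ((1 - q) * (2 - p)) := by
      field_simp; ring
    have : p - q ≠ 0 := by linarith
    rw [e1, e2]
    field_simp
  have hquot : (1 - p) * (2 - q) / ((1 - q) * (2 - p)) / ((2 - p) / (2 - q)) =
      (1 - p) * (2 - q) ^ 2 / ((1 - q) * (2 - p) ^ 2) := by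
    field_simp
  set s := (1 - p) * (2 - q) / ((1 - q) * (2 - p))
  set l := (2 - p) / (2 - q)
  have hs1 : s < 1 := by rw [div_lt_one (by positivity)]; nlinarith
  refine curvatureBound_of_log_le (by linarith) (by positivity) hs1 (div_pos h2p h2q) hl1
    (div_mul_cancel₀ _ h2q.ne') hp ?_
  rw [hratio, hquot, log_mul_div_mul one_pos h2q h1q h2p, log_mul_div_mul h1p h2q h1q h2p,
    log_mul_div_mul h1p (pow_pos h2q 2) h1q (pow_pos h2p 2), log_one, log_pow, log_pow]
  have hw := mul_log_sub_mul_log_le h1p (by linarith : 1 - p ≤ 1 - q) (by linarith)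
  rw [show 1 + (1 - q) = 2 - q by ring, show 1 + (1 - p) = 2 - p by ring] at hw
  push_cast
  linarith

section Expectation

variable [Fintype Ω] {μ : Ω → ℝ}

lemma pexp_mono (hμ : ∀ ω, 0 ≤ μ ω) {g h : Ω → ℝ} (hgh : ∀ ω, g ω ≤ h ω) :
    pexp μ g ≤ pexp μ h :=
  sum_le_sum fun ω _ => mul_le_mul_of_nonneg_left (hgh ω) (hμ ω)

lemma pexp_pos [Nonempty Ω] (hμ : ∀ ω, 0 < μ ω) {g : Ω → ℝ} (hg : ∀ ω, 0 < g ω) :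
    0 < pexp μ g :=
  sum_pos (fun ω _ => mul_pos (hμ ω) (hg ω)) univ_nonempty

lemma pexp_add (g h : Ω → ℝ) : pexp μ (fun ω => g ω + h ω) = pexp μ g + pexp μ h := by
  simp only [pexp, mul_add, sum_add_distrib]

lemma pexp_sub (g h : Ω → ℝ) : pexp μ (fun ω => g ω - h ω) = pexp μ g - pexp μ h := by
  simp only [pexp, mul_sub, sum_sub_distrib]

lemma pexp_const_mul (c : ℝ) (g : Ω → ℝ) : pexp μ (fun ω => c * g ω) = c * pexp μ g := by
  simp only [pexp, mul_sum]
  exact sum_congr rfl fun ω _ => by ring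

lemma pexp_const (hμ1 : ∑ ω, μ ω = 1) (c : ℝ) : pexp μ (fun _ => c) = c := by
  simp only [pexp, ← sum_mul, hμ1, one_mul]

lemma pnorm_pos [Nonempty Ω] (hμ : ∀ ω, 0 < μ ω) (r : ℝ) {g : Ω → ℝ} (hg : ∀ ω, 0 < g ω) :
    0 < pnorm μ r g := by
  unfold pnorm
  split_ifs
  · exact exp_pos _
  · exact rpow_pos_of_pos (pexp_pos hμ fun ω => rpow_pos_of_pos (hg ω) r) _

lemma boxCox_pnorm [Nonempty Ω] (hμ : ∀ ω, 0 < μ ω) (hμ1 : ∑ ω, μ ω = 1) (r : ℝ) {g : Ω → ℝ}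
    (hg : ∀ ω, 0 < g ω) : boxCox r (pnorm μ r g) = pexp μ fun ω => boxCox r (g ω) := by
  rcases eq_or_ne r 0 with rfl | hr
  · simp [pnorm, boxCox_zero_left]
  · have hP : 0 < pexp μ fun ω => g ω ^ r := pexp_pos hμ fun ω => rpow_pos_of_pos (hg ω) r
    rw [pnorm, if_neg hr, boxCox_of_ne_zero hr, ← rpow_mul hP.le, one_div_mul_cancel hr,
      rpow_one]
    simp only [boxCox_of_ne_zero hr, div_eq_inv_mul, pexp_const_mul, pexp_sub, pexp_const hμ1]

lemma pnorm_const_mul (hμ : ∀ ω, 0 ≤ μ ω) (hμ1 : ∑ ω, μ ω = 1) (r : ℝ) {c : ℝ} (hc : 0 < c)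
    {g : Ω → ℝ} (hg : ∀ ω, 0 < g ω) : pnorm μ r (fun ω => c * g ω) = c * pnorm μ r g := by
  unfold pnorm
  split_ifs with hr
  · simp only [log_mul hc.ne' (hg _).ne', pexp_add, pexp_const hμ1, exp_add, exp_log hc]
  · have hP : 0 ≤ pexp μ fun ω => g ω ^ r :=
      sum_nonneg fun ω _ => mul_nonneg (hμ ω) (rpow_nonneg (hg ω).le r)
    simp only [mul_rpow hc.le (hg _).le, pexp_const_mul]
    rw [mul_rpow (rpow_nonneg hc.le r) hP, ← rpow_mul hc.le, mul_one_div_cancel hr, rpow_one]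

lemma pnorm_le_pnorm_of_pexp_boxCox_le [Nonempty Ω] (hμ : ∀ ω, 0 < μ ω) (hμ1 : ∑ ω, μ ω = 1)
    {p q : ℝ} (hqp : q ≤ p) {g h : Ω → ℝ} (hg : ∀ ω, 0 < g ω) (hh : ∀ ω, 0 < h ω)
    (hgh : (pexp μ fun ω => boxCox p (g ω)) ≤ pexp μ fun ω => boxCox q (h ω)) :
    pnorm μ p g ≤ pnorm μ q h := by
  refine ((strictMonoOn_boxCox q).le_iff_le (pnorm_pos hμ p hg) (pnorm_pos hμ q hh)).1 ?_
  calc boxCox q (pnorm μ p g) ≤ boxCox p (pnorm μ p g) :=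
        boxCox_le_boxCox_left (pnorm_pos hμ p hg) hqp
    _ ≤ boxCox q (pnorm μ q h) := by
        rwa [boxCox_pnorm hμ hμ1 p hg, boxCox_pnorm hμ hμ1 q hh]

/-- After normalising `E f = 1`, the centred term `(s - 1) (f - 1)` of the pointwise inequality
has mean zero. -/
lemma pnorm_le_pnorm_affine {p q s σ : ℝ} (hμ : ∀ ω, 0 < μ ω) (hμ1 : ∑ ω, μ ω = 1) {f : Ω → ℝ}
    (hf : ∀ ω, 0 < f ω) (hqp : q ≤ p) (hq : q ≤ 1) (hs : 0 ≤ s) (hsσ : s ≤ σ) (hσ : σ ≤ 1)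
    (hK : CurvatureBound p q σ) :
    pnorm μ p f ≤ pnorm μ q fun ω => pexp μ f + s * (f ω - pexp μ f) := by
  have : Nonempty Ω := by
    by_contra h
    simp [not_nonempty_iff.1 h] at hμ1
  set m := pexp μ f
  have hm : 0 < m := pexp_pos hμ hf
  set Y : Ω → ℝ := fun ω => f ω / m
  have hY : ∀ ω, 0 < Y ω := fun ω => div_pos (hf ω) hm
  have hEY : pexp μ Y = 1 := by
    simp only [Y, div_eq_inv_mul, pexp_const_mul]
    exact inv_mul_cancel₀ hm.ne'
  have hU : ∀ ω, 0 < 1 - s + s * Y ω := fun ω => one_sub_add_mul_pos hs (hsσ.trans hσ) (hY ω)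
  have hnormalised : pnorm μ p Y ≤ pnorm μ q fun ω => 1 - s + s * Y ω := by
    refine pnorm_le_pnorm_of_pexp_boxCox_le hμ hμ1 hqp hY hU ?_
    calc (pexp μ fun ω => boxCox p (Y ω))
        = pexp μ fun ω => boxCox p (Y ω) + (s - 1) * (Y ω - 1) := by
          rw [pexp_add, pexp_const_mul, pexp_sub, hEY, pexp_const hμ1, sub_self, mul_zero,
            add_zero]
      _ ≤ pexp μ fun ω => boxCox q (1 - s + s * Y ω) :=
          pexp_mono (fun ω => (hμ ω).le) fun ω =>
            boxCox_add_le_boxCox_affine_of_le hq hs hsσ hσ hK (hY ω)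
  have hf_eq : f = fun ω => m * Y ω := funext fun ω => (mul_div_cancel₀ _ hm.ne').symm
  have hTf_eq : (fun ω => m + s * (f ω - m)) = fun ω => m * (1 - s + s * Y ω) :=
    funext fun ω => by simp only [Y]; field_simp; ring
  rw [hTf_eq, pnorm_const_mul (fun ω => (hμ ω).le) hμ1 q hm hU, hf_eq,
    pnorm_const_mul (fun ω => (hμ ω).le) hμ1 p hm hY]
  exact mul_le_mul_of_nonneg_left hnormalised hm.le

end Expectation

lemma exp_neg_le_div_of_log_div_le {a b t : ℝ} (ha : 0 < a) (hb : 0 < b) (h : log (a / b) ≤ t) :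
    exp (-t) ≤ b / a := by
  calc exp (-t) ≤ exp (-log (a / b)) := exp_le_exp.2 (neg_le_neg h)
    _ = b / a := by rw [← log_inv, inv_div, exp_log (div_pos hb ha)]

/-- strong reverse hypercontractivity for the simple semigroup
`T_t f = E f + e^{-t} (f - E f)`. -/
theorem simple_reverse_hyper_strong [Fintype Ω] (μ : Ω → ℝ)
    (hμpos : ∀ ω, 0 < μ ω) (hμ1 : ∑ ω, μ ω = 1)
    (f : Ω → ℝ) (hf : ∀ ω, 0 < f ω) (p q t : ℝ)
    (hcase : (q < p ∧ p ≤ 0 ∧ Real.log ((2 - q) / (2 - p)) ≤ t) ∨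
      (0 ≤ q ∧ q < p ∧ p < 1 ∧
        Real.log ((1 - q) * (2 - p) / ((1 - p) * (2 - q))) ≤ t)) :
    pnorm μ p f ≤
      pnorm μ q (fun ω => pexp μ f + Real.exp (-t) * (f ω - pexp μ f)) := by
  rcases hcase with ⟨hqp, hp, ht⟩ | ⟨hq, hqp, hp, ht⟩
  · have h2q : 0 < 2 - q := by linarith
    exact pnorm_le_pnorm_affine hμpos hμ1 hf hqp.le (by linarith) (exp_pos _).le
      (exp_neg_le_div_of_log_div_le h2q (by linarith) ht)
      ((div_le_one h2q).2 (by linarith)) (curvatureBound_of_nonpos hqp hp)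
  · have hden : 0 < (1 - q) * (2 - p) := by nlinarith
    exact pnorm_le_pnorm_affine hμpos hμ1 hf hqp.le (by linarith) (exp_pos _).le
      (exp_neg_le_div_of_log_div_le hden (by nlinarith) ht)
      ((div_le_one hden).2 (by nlinarith)) (curvatureBound_of_nonneg hq hqp hp)

end
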